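/- arXiv:2103.12875 — 2 statements merged into one kernel-verified Lean document; each statement's English description precedes it below -/
import Mathlib

section
/- Let E be a ternary Dyck vector (a Dyck vector with all entries in {0,1,2}) and let S = 0 E 1 be the concatenation of a 0, then E, then a 1. Then len(S) = len(E) + 2, area(S) = area(E) + 1, dinv(S) = dinv(E) + len(E), and defc(S) = defc(E) + len(E) > defc(E). -/
/-- dinv contribution of an entry coming from extended negative positions. -/
def negContrib (x : ℤ) : ℕ := (if x ≤ -1 then 1 else 0) + (if x ≤ -2 then 1 else 0)

/-- The diagonal inversion statistic of a quasi-Dyck vector, with the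
convention `v_k = k - 1` for `k ≤ 0`. -/
def dinv (v : List ℤ) : ℕ :=
  (Finset.univ.filter (fun p : Fin v.length × Fin v.length =>
      (p.1 : ℕ) < (p.2 : ℕ) ∧ (v.get p.1 - v.get p.2 = 0 ∨ v.get p.1 - v.get p.2 = 1))).card
  + (v.map negContrib).sum

def area (v : List ℤ) : ℤ := v.sum

def defc (v : List ℤ) : ℤ := (v.length.choose 2 : ℤ) - area v - (dinv v : ℤ)

/-- Quasi-Dyck vector: nonempty, starts with 0, consecutive increases ≤ 1. -/
def IsQDV (v : List ℤ) : Prop :=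
  v.head? = some 0 ∧ ∀ i : ℕ, i + 1 < v.length → v.getD (i + 1) 0 ≤ v.getD i 0 + 1

def IsDyck (v : List ℤ) : Prop := IsQDV v ∧ ∀ x ∈ v, 0 ≤ x

def stepRel (v w : List ℤ) : Prop := w = 0 :: v.map (· + 1)

def dyckEquiv : List ℤ → List ℤ → Prop := Relation.EqvGen stepRel

def dyckSetoid : Setoid (List ℤ) := Relation.EqvGen.setoid stepRel

abbrev DyckClass := Quotient dyckSetoid

def cls (v : List ℤ) : DyckClass := Quotient.mk dyckSetoid v

/-- Reduced Dyck vector: a Dyck vector that is not `0 z⁺` for a Dyck vector `z`. -/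
def IsReducedDV (v : List ℤ) : Prop :=
  IsDyck v ∧ ¬ ∃ z : List ℤ, IsDyck z ∧ v = 0 :: z.map (· + 1)

/-- The leader of a QDV: the largest `d` such that `v` starts with `0,1,...,d`. -/
def leader (v : List ℤ) : ℕ :=
  Nat.findGreatest (fun d => ∀ i, i ≤ d → v.getD i 0 = (i : ℤ)) (v.length - 1)

/-- Delete the leader symbol and append `leader - 1`. -/
def nuStep (v : List ℤ) : List ℤ :=
  v.take (leader v) ++ v.drop (leader v + 1) ++ [(leader v : ℤ) - 1]

def nuApplies (v : List ℤ) : Prop :=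
  IsQDV v ∧ 2 ≤ v.length ∧ 0 ≤ v.getD 1 0 ∧ (leader v : ℤ) ≤ v.getLastD 0 + 2

/-- The map NU₁ on Dyck classes, as a relation. -/
def nuClassRel (c c' : DyckClass) : Prop :=
  ∃ v, nuApplies v ∧ c = cls v ∧ c' = cls (nuStep v)

def stepOk (A : List ℤ) : Prop := ∀ i : ℕ, i + 1 < A.length → A.getD (i + 1) 0 ≤ A.getD i 0 + 1

def okA (A : List ℤ) : Prop :=
  A = [] ∨ ((∀ x ∈ A, x ≤ 2) ∧ 0 ≤ A.getLastD 0 ∧ stepOk A)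

def okB (B : List ℤ) : Prop :=
  B = [] ∨ ((∀ x ∈ B, x ≤ 2) ∧ B.headD 0 ≤ 1 ∧ -1 ≤ B.getLastD 0 ∧ stepOk B)

/-- The map NU₂ on Dyck classes, as a relation. -/
def nu2ClassRel (c c' : DyckClass) : Prop :=
  (∃ (h : ℕ) (A : List ℤ), 2 ≤ h ∧ okA A ∧
      c = cls ([0, 1] ++ List.replicate h (2:ℤ) ++ A ++ List.replicate (h - 1) (-1)) ∧
      c' = cls (List.replicate h (0:ℤ) ++ [1] ++ A ++ List.replicate h 1)) ∨
  (∃ (k : ℕ) (B : List ℤ), 1 ≤ k ∧ okB B ∧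
      c = cls ([0, 1] ++ List.replicate k (2:ℤ) ++ B ++ List.replicate k (-1)) ∧
      c' = cls (List.replicate (k + 1) (0:ℤ) ++ B ++ [0] ++ List.replicate k 1))

/-- The extended next-up map NU = NU₁ ∪ NU₂, as a relation on Dyck classes. -/
def nuRel (c c' : DyckClass) : Prop := nuClassRel c c' ∨ nu2ClassRel c c'

/-- An integer partition, given by its weakly decreasing list of positive parts. -/
def IsPartitionList (l : List ℕ) : Prop := l.Pairwise (· ≥ ·) ∧ ∀ x ∈ l, 0 < x

/-- `phi l n` = the QDV `(0 - λ_n, 1 - λ_{n-1}, ..., (n-1) - λ_1)`. -/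
def phi (l : List ℕ) (n : ℕ) : List ℤ :=
  List.ofFn (fun i : Fin n => (i : ℤ) - (l.getD (n - 1 - (i : ℕ)) 0 : ℤ))

def nuOne (g : List ℕ) : List ℕ :=
  (g.length + 1) :: (g.map (· - 1)).filter (fun x => 0 < x)

def ndOne (g : List ℕ) : List ℕ :=
  g.tail.map (· + 1) ++ List.replicate (g.headD 0 - g.length) 1

/-- dinv of a partition: number of cells with arm - leg ∈ {0,1}. -/
def pdinv (l : List ℕ) : ℕ :=
  (Finset.univ.filter (fun c : Fin l.length × Fin (l.headD 0) =>
    (c.2 : ℕ) < l.get c.1 ∧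
      (l.get c.1 - 1 - (c.2 : ℕ) =
          (Finset.univ.filter (fun i' : Fin l.length =>
            (c.1 : ℕ) < (i' : ℕ) ∧ (c.2 : ℕ) < l.get i')).card ∨
        l.get c.1 - 1 - (c.2 : ℕ) =
          (Finset.univ.filter (fun i' : Fin l.length =>
            (c.1 : ℕ) < (i' : ℕ) ∧ (c.2 : ℕ) < l.get i')).card + 1))).card

/-- `bWord [n_1, ..., n_r]` = `0 1^{n_1} 0 1^{n_2} ⋯ 0 1^{n_r}`. -/
def bWord (ns : List ℕ) : List ℤ :=
  (ns.map (fun m => (0:ℤ) :: List.replicate m 1)).flatten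

/-- `msize [n_1, ..., n_r] = Σ i·n_i`, the size of the partition `(r^{n_r},...,1^{n_1})`. -/
def msize (ns : List ℕ) : ℕ :=
  (List.zipWith (fun m i => m * i) ns (List.range' 1 ns.length)).sum

/-- The reduced Dyck vector `0 B_μ` of the tail initiator of a partition. -/
def tiVec (l : List ℕ) : List ℤ :=
  (0:ℤ) :: ((List.range' 1 (l.headD 0)).map
    (fun i => (0:ℤ) :: List.replicate (l.count i) (1:ℤ))).flatten

/-- `c` is the second-order tail initiator of the partition `l`: obtained from
`[0 B_μ]` by iterating the extended next-down map as long as possible. -/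
def IsTI2 (l : List ℕ) (c : DyckClass) : Prop :=
  Relation.ReflTransGen (fun x y => nuRel y x) (cls (tiVec l)) c ∧ ∀ d, ¬ nuRel d c

/-- `m` is the minimum triangle height of the Dyck class `c`. -/
def mindIs (c : DyckClass) (m : ℕ) : Prop :=
  ∃ v, IsReducedDV v ∧ c = cls v ∧ v.length = m

/-- Flagpole partition: `|μ| + 8 ≤ 2 mind(TI₂(μ))`. -/
def IsFlagpole (l : List ℕ) : Prop :=
  ∃ c m, IsTI2 l c ∧ mindIs c m ∧ l.sum + 8 ≤ 2 * m

/-- The Dyck vector `v(λ,a,ε) = 0 0 1 2^{a-ε} B_λ⁺ 1^ε`. -/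
def vLam (ns : List ℕ) (a ε : ℕ) : List ℤ :=
  [0, 0, 1] ++ List.replicate (a - ε) (2:ℤ) ++ (bWord ns).map (· + 1) ++ List.replicate ε 1

/-!
Since `S = 0 E 1` has nonnegative entries, only the pair count of `dinv` matters. Compared with
`E`, the new pairs of `S` are `(0, e)`, counted iff `e = 0`, `(e, 1)`, counted iff `e ∈ {1, 2}`,
and `(0, 1)`, never counted. As `E` is ternary, each entry `e` contributes exactly one new pair,
so `dinv` grows by `len E`; together with `C(n + 2, 2) = C(n, 2) + 2n + 1` and the area growing
by `1`, the defect grows by `len E > 0`.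
-/

def dinvPairs (v : List ℤ) : ℕ :=
  (Finset.univ.filter (fun p : Fin v.length × Fin v.length =>
      (p.1 : ℕ) < (p.2 : ℕ) ∧ (v.get p.1 - v.get p.2 = 0 ∨ v.get p.1 - v.get p.2 = 1))).card

lemma List.countP_eq_sum_range {α : Type*} (p : α → Bool) (v : List α) (d : α) :
    v.countP p = ∑ i ∈ Finset.range v.length, if p (v.getD i d) then 1 else 0 := by
  induction v with
  | nil => simp
  | cons a w ih =>
    rw [List.countP_cons, ih, List.length_cons, Finset.sum_range_succ']
    simp [add_comm]

lemma dinvPairs_eq_sum_range (v : List ℤ) : dinvPairs v =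
    ∑ i ∈ Finset.range v.length, ∑ j ∈ Finset.range v.length,
      if i < j ∧ (v.getD i 0 - v.getD j 0 = 0 ∨ v.getD i 0 - v.getD j 0 = 1) then 1 else 0 := by
  have get_eq_getD (i : Fin v.length) : v.get i = v.getD i 0 := by simp
  rw [dinvPairs, Finset.card_filter, Fintype.sum_prod_type]
  simp_rw [get_eq_getD]
  rw [Fin.sum_univ_eq_sum_range (fun i => ∑ j : Fin v.length,
    if i < (j : ℕ) ∧ (v.getD i 0 - v.getD j 0 = 0 ∨ v.getD i 0 - v.getD j 0 = 1) then 1 else 0)]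
  refine Finset.sum_congr rfl fun i _ => ?_
  exact Fin.sum_univ_eq_sum_range
    (fun j => if i < j ∧ (v.getD i 0 - v.getD j 0 = 0 ∨ v.getD i 0 - v.getD j 0 = 1) then 1 else 0) _

lemma dinvPairs_cons (a : ℤ) (v : List ℤ) :
    dinvPairs (a :: v) = v.countP (fun x => a - x = 0 ∨ a - x = 1) + dinvPairs v := by
  rw [dinvPairs_eq_sum_range, dinvPairs_eq_sum_range, v.countP_eq_sum_range _ 0,
    List.length_cons, Finset.sum_range_succ', add_comm]
  simp only [List.getD_cons_succ, List.getD_cons_zero]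
  congr 1
  · rw [Finset.sum_range_succ']
    simp
  · refine Finset.sum_congr rfl fun i _ => ?_
    rw [Finset.sum_range_succ']
    simp

lemma dinvPairs_append_singleton (v : List ℤ) (b : ℤ) :
    dinvPairs (v ++ [b]) = dinvPairs v + v.countP (fun x => x - b = 0 ∨ x - b = 1) := by
  have getD_lt : ∀ i < v.length, (v ++ [b]).getD i 0 = v.getD i 0 :=
    fun i hi => List.getD_append _ _ _ _ hi
  have getD_length : (v ++ [b]).getD v.length 0 = b := by simp [List.getD_eq_getElem?_getD]
  rw [dinvPairs_eq_sum_range, dinvPairs_eq_sum_range, v.countP_eq_sum_range _ 0,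
    List.length_append, List.length_singleton, Finset.sum_range_succ,
    ← Finset.sum_add_distrib, Finset.sum_eq_zero (s := Finset.range (v.length + 1))
    (fun j hj => if_neg fun h => by rw [Finset.mem_range] at hj; omega), add_zero]
  refine Finset.sum_congr rfl fun i hi => ?_
  rw [Finset.mem_range] at hi
  rw [Finset.sum_range_succ, getD_lt i hi, getD_length]
  congr 1
  · refine Finset.sum_congr rfl fun j hj => ?_
    rw [getD_lt j (Finset.mem_range.mp hj)]
  · simp [hi]

lemma sum_map_negContrib_eq_zero {v : List ℤ} (hv : ∀ x ∈ v, 0 ≤ x) :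
    (v.map negContrib).sum = 0 := by
  refine List.sum_eq_zero fun y hy => ?_
  obtain ⟨x, hx, rfl⟩ := List.mem_map.mp hy
  have := hv x hx
  rw [negContrib, if_neg (by omega), if_neg (by omega)]
  rfl

lemma dinv_eq_dinvPairs {v : List ℤ} (hv : ∀ x ∈ v, 0 ≤ x) : dinv v = dinvPairs v := by
  rw [dinv, sum_map_negContrib_eq_zero hv, add_zero]
  rfl

lemma countP_dinvPair_zero_add_countP_dinvPair_one {E : List ℤ}
    (h3 : ∀ x ∈ E, x = 0 ∨ x = 1 ∨ x = 2) :
    E.countP (fun x => (0 : ℤ) - x = 0 ∨ (0 : ℤ) - x = 1) +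
      E.countP (fun x => x - 1 = 0 ∨ x - 1 = 1) = E.length := by
  rw [E.length_eq_countP_add_countP (fun x => (0 : ℤ) - x = 0 ∨ (0 : ℤ) - x = 1)]
  congr 1
  refine List.countP_congr fun x hx => ?_
  have := h3 x hx
  simp only [decide_eq_true_eq, decide_not, Bool.not_eq_eq_eq_not, Bool.not_true,
    decide_eq_false_iff_not]
  omega

lemma dinvPairs_zero_cons_append_one {E : List ℤ} (h3 : ∀ x ∈ E, x = 0 ∨ x = 1 ∨ x = 2) :
    dinvPairs ((0 : ℤ) :: E ++ [1]) = dinvPairs E + E.length := by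
  rw [List.cons_append, ← List.cons_append, dinvPairs_append_singleton, dinvPairs_cons,
    List.countP_cons, if_neg (by decide), ← countP_dinvPair_zero_add_countP_dinvPair_one h3]
  omega

lemma choose_two_add_two (n : ℕ) : ((n + 2).choose 2 : ℤ) = n.choose 2 + 2 * n + 1 := by
  rw [Nat.choose_succ_succ' (n + 1) 1, Nat.choose_succ_succ' n 1, Nat.choose_one_right,
    Nat.choose_one_right]
  push_cast
  ring

theorem stmt4 (E : List ℤ) (hE : IsDyck E) (h3 : ∀ x ∈ E, x = 0 ∨ x = 1 ∨ x = 2) :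
    ((0:ℤ) :: E ++ [1]).length = E.length + 2 ∧
    area ((0:ℤ) :: E ++ [1]) = area E + 1 ∧
    dinv ((0:ℤ) :: E ++ [1]) = dinv E + E.length ∧
    defc ((0:ℤ) :: E ++ [1]) = defc E + E.length ∧
    defc E < defc ((0:ℤ) :: E ++ [1]) := by
  obtain ⟨⟨hhead, -⟩, hnonneg⟩ := hE
  have hlen : ((0:ℤ) :: E ++ [1]).length = E.length + 2 := by simp
  have harea : area ((0:ℤ) :: E ++ [1]) = area E + 1 := by simp [area]
  have hdinv : dinv ((0:ℤ) :: E ++ [1]) = dinv E + E.length := by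
    have hS : ∀ x ∈ (0:ℤ) :: E ++ [1], 0 ≤ x := by
      simpa [or_imp, forall_and] using hnonneg
    rw [dinv_eq_dinvPairs hS, dinv_eq_dinvPairs hnonneg, dinvPairs_zero_cons_append_one h3]
  have hdefc : defc ((0:ℤ) :: E ++ [1]) = defc E + E.length := by
    rw [defc, defc, hlen, harea, hdinv, choose_two_add_two]
    push_cast
    ring
  have hpos : (0:ℤ) < E.length := by
    have : E ≠ [] := by rintro rfl; simp at hhead
    exact_mod_cast List.length_pos_iff.mpr this
  exact ⟨hlen, harea, hdinv, hdefc, by omega⟩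
end

section
/- Let v be a reduced Dyck vector (a Dyck vector of minimal length in its Dyck class, equivalently one not of the form 0 z⁺). If v starts with 0,0 and NU₁([v]) is defined, then mind(NU₁([v])) = mind([v]) + 1. If v starts with 0,1 and NU₁([v]) is defined, then mind(NU₁([v])) = mind([v]). -/
/-!
A Dyck vector `0 w` is reduced exactly when `w` is empty or contains a `0`.

If `v = 0 0 t`, the leader is `0` and `NU₁` produces the quasi-Dyck vector `0 t (-1)`, whose
class is represented by the reduced Dyck vector `0 1 t⁺ 0`, one symbol longer than `v`.

If `v = 0 1 t`, write `v = 0 1 ⋯ d r` with `d ≥ 1` the leader. The zero that `v` has after its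
first entry lies in `r`, so `NU₁` produces `0 1 ⋯ (d-1) r (d-1)`, which is already a reduced Dyck
vector of the same length as `v`.
-/

open List

theorem isQDV_iff (v : List ℤ) :
    IsQDV v ↔ v.head? = some 0 ∧ v.IsChain (fun a b => b ≤ a + 1) := by
  refine and_congr_right fun _ => ?_
  rw [isChain_iff_getElem]
  refine forall_congr' fun i => forall_congr' fun hi => ?_
  simp only [getD_eq_getElem?_getD, getElem?_eq_getElem hi,
    getElem?_eq_getElem (Nat.lt_of_succ_lt hi), Option.getD_some]

theorem IsQDV.zero_cons_map_add_one {w : List ℤ} (hw : IsQDV w) :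
    IsQDV (0 :: w.map (· + 1)) := by
  obtain ⟨hhead, hchain⟩ := (isQDV_iff w).1 hw
  refine (isQDV_iff _).2 ⟨rfl, isChain_cons.2 ⟨by simp [hhead], ?_⟩⟩
  rw [isChain_map]
  exact hchain.imp fun a b h => by linarith

theorem IsReducedDV.of_zero_mem_tail {v : List ℤ} (hv : IsDyck v) (h0 : 0 ∈ v.tail) :
    IsReducedDV v := by
  refine ⟨hv, ?_⟩
  rintro ⟨z, hz, rfl⟩
  obtain ⟨x, hx, hx0⟩ := mem_map.1 h0
  linarith [hz.2 x hx]

theorem IsReducedDV.zero_mem_tail {v : List ℤ} (hv : IsReducedDV v) (hne : v.tail ≠ []) :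
    0 ∈ v.tail := by
  obtain ⟨hq, hnn⟩ := hv.1
  obtain ⟨hhead, hchain⟩ := (isQDV_iff v).1 hq
  obtain ⟨w, rfl⟩ : ∃ w, v = 0 :: w := ⟨v.tail, eq_cons_of_mem_head? hhead⟩
  obtain ⟨b, w, rfl⟩ := exists_cons_of_ne_nil hne
  by_contra h0
  have hpos : ∀ x ∈ b :: w, 1 ≤ x := fun x hx =>
    lt_of_le_of_ne (hnn x (mem_cons_of_mem _ hx)) fun h => h0 (h ▸ hx)
  have hb : b = 1 := le_antisymm (isChain_cons_cons.1 hchain).1 (hpos b mem_cons_self)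
  refine hv.2 ⟨(b :: w).map (· - 1), ⟨(isQDV_iff _).2 ⟨by simp [hb], ?_⟩, ?_⟩, ?_⟩
  · rw [isChain_map]
    exact hchain.tail.imp fun x y h => by linarith
  · simpa using fun x hx => hpos x hx
  · simp [Function.comp_def]

theorem isReducedDV_zero_cons_map_add_one {w : List ℤ} (hw : IsQDV w) (hge : ∀ x ∈ w, -1 ≤ x)
    (hmem : -1 ∈ w) : IsReducedDV (0 :: w.map (· + 1)) := by
  refine .of_zero_mem_tail ⟨hw.zero_cons_map_add_one, ?_⟩ (mem_map.2 ⟨-1, hmem, by norm_num⟩)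
  simp only [mem_cons, mem_map]
  rintro x (rfl | ⟨y, hy, rfl⟩)
  · rfl
  · linarith [hge y hy]

theorem exists_eq_range'_append (k : ℕ) (v : List ℤ) :
    ∃ d r, v = (range' k d).map (↑) ++ r ∧ r.head? ≠ some ((k + d : ℕ) : ℤ) := by
  induction v generalizing k with
  | nil => exact ⟨0, [], rfl, by simp⟩
  | cons a w ih =>
    by_cases ha : a = k
    · obtain ⟨d, r, rfl, hr⟩ := ih (k + 1)
      exact ⟨d + 1, r, by simp [range'_succ, ha], by rwa [← add_assoc, add_right_comm]⟩
    · exact ⟨0, a :: w, rfl, by simpa using ha⟩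

theorem exists_eq_range_append {v : List ℤ} (hv : v.head? = some 0) :
    ∃ d r, v = (range (d + 1)).map (↑) ++ r ∧ r.head? ≠ some ((d + 1 : ℕ) : ℤ) := by
  obtain ⟨_ | d, r, rfl, hr⟩ := exists_eq_range'_append 0 v
  · exact absurd hv (by simpa using hr)
  · exact ⟨d, r, by rw [range_eq_range'], by simpa using hr⟩

theorem leader_range_append {d : ℕ} {r : List ℤ} (hr : r.head? ≠ some ((d + 1 : ℕ) : ℤ)) :
    leader ((range (d + 1)).map (↑) ++ r) = d := by
  have hlen : ((range (d + 1)).map (↑) : List ℤ).length = d + 1 := by simp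
  have hprefix : ∀ i ≤ d, ((range (d + 1)).map ((↑) : ℕ → ℤ) ++ r).getD i 0 = i := fun i hi => by
    rw [getD_append _ _ _ _ (by omega), getD_eq_getElem _ _ (by simp; omega)]
    simp
  rw [leader, Nat.findGreatest_eq_iff]
  refine ⟨by simp, fun _ => hprefix, fun n hdn _ hP => hr ?_⟩
  have h := hP (d + 1) hdn
  rw [getD_append_right _ _ _ _ (by omega), hlen, Nat.sub_self] at h
  cases r with
  | nil => simp at h; omega
  | cons a r => simpa using h

theorem nuStep_range_append {d : ℕ} {r : List ℤ} (hr : r.head? ≠ some ((d + 1 : ℕ) : ℤ)) :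
    nuStep ((range (d + 1)).map (↑) ++ r) = (range d).map (↑) ++ r ++ [(d : ℤ) - 1] := by
  have hlen : ((range (d + 1)).map (↑) : List ℤ).length = d + 1 := by simp
  rw [nuStep, leader_range_append hr, drop_left' hlen, take_append_of_le_length (by simp),
    ← map_take, take_range, min_eq_left (Nat.le_succ d)]

theorem length_nuStep {v : List ℤ} (hv : v ≠ []) : (nuStep v).length = v.length := by
  have : leader v ≤ v.length - 1 := Nat.findGreatest_le _
  have := length_pos_iff.2 hv
  simp only [nuStep, length_append, length_take, length_drop, length_singleton]
  omega

theorem isChain_map_range (d : ℕ) :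
    ((range d).map ((↑) : ℕ → ℤ)).IsChain (fun a b => b ≤ a + 1) := by
  rw [isChain_map, isChain_range]
  intro m _
  push_cast
  rfl

theorem nuApplies.isQDV_nuStep {v : List ℤ} (h : nuApplies v) : IsQDV (nuStep v) := by
  obtain ⟨hq, hlen, hv1, hlast⟩ := h
  obtain ⟨hhead, hchain⟩ := (isQDV_iff v).1 hq
  obtain ⟨d, r, rfl, hr⟩ := exists_eq_range_append hhead
  rw [leader_range_append hr] at hlast
  rw [nuStep_range_append hr, isQDV_iff]
  obtain ⟨-, hrchain, hjoin⟩ := isChain_append.1 hchain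
  have hrd : ∀ y ∈ r.head?, y ≤ d := fun y hy => by
    have := hjoin d (by simp [getLast?_range]) y hy
    have : y ≠ d + 1 := by rintro rfl; exact hr (by simpa using hy)
    omega
  have hrlast : ∀ x ∈ r.getLast?, (d : ℤ) ≤ x + 2 := fun x hx => by
    rwa [getLastD_eq_getLast?, getLast?_append, Option.mem_def.1 hx] at hlast
  cases d with
  | zero =>
    obtain ⟨a, r, rfl⟩ := exists_cons_of_ne_nil (l := r) (by rintro rfl; simp at hlen)
    have ha : a = 0 := le_antisymm (hrd a rfl) (by simpa using hv1)
    subst ha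
    refine ⟨rfl, isChain_append.2 ⟨hrchain, isChain_singleton _, fun x hx y hy => ?_⟩⟩
    have := hrlast x (by simpa using hx)
    simp only [head?_cons, Option.mem_def, Option.some.injEq] at hy
    omega
  | succ e =>
    refine ⟨by simp [head?_range], isChain_append.2 ⟨isChain_append.2 ⟨isChain_map_range _, hrchain,
      fun x hx y hy => ?_⟩, isChain_singleton _, fun x hx y hy => ?_⟩⟩
    · have := hrd y hy
      have : x = e := by simpa [getLast?_range, eq_comm] using hx
      omega
    · simp only [head?_cons, Option.mem_def, Option.some.injEq] at hy
      rw [getLast?_append] at hx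
      cases hz : r.getLast? with
      | none =>
        have : x = e := by simpa [hz, getLast?_range, eq_comm] using hx
        omega
      | some z =>
        have := hrlast z hz
        have : x = z := by simpa [hz, eq_comm] using hx
        omega

theorem nuStep_zero_zero_cons (t : List ℤ) : nuStep (0 :: 0 :: t) = 0 :: t ++ [-1] :=
  nuStep_range_append (d := 0) (by simp)

theorem nuApplies_zero_zero_cons {t : List ℤ} (hv : IsDyck (0 :: 0 :: t)) :
    nuApplies (0 :: 0 :: t) := by
  have hlead : leader (0 :: 0 :: t) = 0 := leader_range_append (d := 0) (by simp)
  refine ⟨hv.1, by simp, le_rfl, ?_⟩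
  rw [hlead, Nat.cast_zero, getLastD_cons, getLastD_cons]
  linarith [hv.2 _ (mem_cons_of_mem _ getLastD_mem_cons)]

theorem IsReducedDV.nuStep_of_take_two_eq_zero_one {v : List ℤ} (hv : IsReducedDV v)
    (h01 : v.take 2 = [0, 1]) (happ : nuApplies v) : IsReducedDV (nuStep v) := by
  have h0 := hv.zero_mem_tail (ne_nil_of_length_pos (by have := happ.2.1; rw [length_tail]; omega))
  obtain ⟨d, r, rfl, hr⟩ := exists_eq_range_append happ.1.1
  obtain ⟨d, rfl⟩ : ∃ e, d = e + 1 := by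
    refine Nat.exists_eq_add_one.2 (Nat.pos_of_ne_zero ?_)
    rintro rfl
    obtain ⟨a, r, rfl⟩ := exists_cons_of_ne_nil (l := r) (by rintro rfl; simp at h01)
    simp_all
  have hr0 : 0 ∈ r := by
    simpa [range_succ_eq_map, show ∀ a : ℕ, (a : ℤ) + 1 + 1 ≠ 0 from fun a => by omega] using h0
  rw [nuStep_range_append hr]
  refine .of_zero_mem_tail ⟨nuStep_range_append hr ▸ happ.isQDV_nuStep, ?_⟩ ?_
  · simp only [mem_append, mem_map, mem_range, mem_singleton]
    rintro x ((⟨i, -, rfl⟩ | hx) | rfl)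
    · positivity
    · exact hv.1.2 x (mem_append_right _ hx)
    · simp
  · simp [range_succ_eq_map, hr0]

theorem stmt14 (v : List ℤ) (hv : IsReducedDV v) :
    (v.take 2 = [0, 0] →
      nuApplies v ∧
        ∃ u, IsReducedDV u ∧ dyckEquiv u (nuStep v) ∧ u.length = v.length + 1) ∧
    (v.take 2 = [0, 1] → nuApplies v →
      ∃ u, IsReducedDV u ∧ dyckEquiv u (nuStep v) ∧ u.length = v.length) := by
  refine ⟨fun h00 => ?_, fun h01 happ => ?_⟩
  · obtain ⟨t, rfl⟩ : ∃ t, v = 0 :: 0 :: t :=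
      ⟨v.drop 2, by simpa [h00] using (take_append_drop 2 v).symm⟩
    have happ := nuApplies_zero_zero_cons hv.1
    have hstep := nuStep_zero_zero_cons t
    refine ⟨happ, 0 :: (nuStep _).map (· + 1), ?_, .symm _ _ (.rel _ _ rfl), by simp [hstep]⟩
    refine isReducedDV_zero_cons_map_add_one happ.isQDV_nuStep ?_ (by simp [hstep])
    intro x hx
    rw [hstep, mem_append, mem_singleton] at hx
    rcases hx with hx | rfl
    · linarith [hv.1.2 x (mem_cons_of_mem _ hx)]
    · rfl
  · have hne : v ≠ [] := ne_nil_of_length_pos (by have := happ.2.1; omega)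
    exact ⟨nuStep v, hv.nuStep_of_take_two_eq_zero_one h01 happ, .refl _, length_nuStep hne⟩
end
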